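/- Let B be a metabelian Lie algebra over a field k satisfying axioms Φ2 and Φ3. Then for every x ∈ B: x ∈ Fit(B) if and only if ⁅⁅x,y⁆,x⁆ = 0 for all y ∈ B. If moreover B is an F_r-algebra with designated embedding ι : F_r → B, then x ∈ Fit(B) if and only if ⁅⁅x,ι(a_i)⁆,x⁆ = 0 for all i = 1,…,r. -/

import Mathlib

open LieAlgebra

universe u v w

/-- A Lie ring is metabelian if it satisfies the identity `⁅⁅x₁,x₂⁆,⁅x₃,x₄⁆⁆ = 0`. -/
def IsMetabelian (L : Type v) [LieRing L] : Prop :=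
  ∀ a b c d : L, ⁅⁅a, b⁆, ⁅c, d⁆⁆ = 0

variable (k : Type u) [Field k]

namespace LieMeta

/-- The canonical projection onto the quotient by a Lie ideal, as a Lie algebra morphism. -/
def mkHom {L : Type v} [LieRing L] [LieAlgebra k L] (I : LieIdeal k L) : L →ₗ⁅k⁆ L ⧸ I :=
  { I.toSubmodule.mkQ with
    map_lie' := fun {_ _} => rfl }

variable {k}

/-- Lift of a Lie algebra morphism through a quotient by an ideal inside its kernel. -/
def qlift {L : Type v} {B : Type w} [LieRing L] [LieAlgebra k L] [LieRing B] [LieAlgebra k B]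
    (I : LieIdeal k L) (f : L →ₗ⁅k⁆ B) (h : I ≤ f.ker) : (L ⧸ I) →ₗ⁅k⁆ B :=
  { Submodule.liftQ I.toSubmodule (f : L →ₗ[k] B)
      (fun x hx => by simpa using (LieHom.mem_ker).mp (h hx)) with
    map_lie' := by
      rintro ⟨x⟩ ⟨y⟩
      exact f.map_lie x y }

@[simp]
theorem qlift_mk {L : Type v} {B : Type w} [LieRing L] [LieAlgebra k L] [LieRing B]
    [LieAlgebra k B] (I : LieIdeal k L) (f : L →ₗ⁅k⁆ B) (h : I ≤ f.ker) (x : L) :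
    qlift I f h (mkHom k I x) = f x := rfl

/-- In a metabelian Lie algebra the second derived ideal vanishes. -/
theorem derivedSeries_two_eq_bot_of_isMetabelian {B : Type w} [LieRing B] [LieAlgebra k B]
    (hB : IsMetabelian B) : derivedSeries k B 2 = ⊥ := by
  have hD1 : ∀ x ∈ derivedSeries k B 1, ∀ m ∈ derivedSeries k B 1, ⁅x, m⁆ = (0 : B) := by
    have hspan : (↑(derivedSeries k B 1) : Submodule k B) =
        Submodule.span k {m | ∃ x ∈ (⊤ : LieIdeal k B), ∃ n ∈ (⊤ : LieIdeal k B), ⁅x, n⁆ = m} := by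
      rw [show derivedSeries k B 1 = ⁅(⊤ : LieIdeal k B), (⊤ : LieIdeal k B)⁆ by
        rw [derivedSeries_def, derivedSeriesOfIdeal_succ, derivedSeriesOfIdeal_zero]]
      exact LieSubmodule.lieIdeal_oper_eq_linear_span' ..
    intro x hx
    have hx' : x ∈ Submodule.span k
        {m | ∃ x ∈ (⊤ : LieIdeal k B), ∃ n ∈ (⊤ : LieIdeal k B), ⁅x, n⁆ = m} := by
      rw [← hspan]; exact hx
    clear hx
    induction hx' using Submodule.span_induction with
    | mem z hz =>
      obtain ⟨a, -, b, -, rfl⟩ := hz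
      intro m hm
      have hm' : m ∈ Submodule.span k
          {m | ∃ x ∈ (⊤ : LieIdeal k B), ∃ n ∈ (⊤ : LieIdeal k B), ⁅x, n⁆ = m} := by
        rw [← hspan]; exact hm
      clear hm
      induction hm' using Submodule.span_induction with
      | mem w hw => obtain ⟨c, -, d, -, rfl⟩ := hw; exact hB a b c d
      | zero => exact lie_zero _
      | add u v _ _ hu hv => rw [lie_add, hu, hv, add_zero]
      | smul t u _ hu => rw [lie_smul, hu, smul_zero]
    | zero => intro m _; exact zero_lie m
    | add u v _ _ hu hv =>
      intro m hm; rw [add_lie, hu m hm, hv m hm, add_zero]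
    | smul t u _ hu => intro m hm; rw [smul_lie, hu m hm, smul_zero]
  rw [eq_bot_iff, show derivedSeries k B 2 = ⁅derivedSeries k B 1, derivedSeries k B 1⁆ by
    rw [derivedSeries_def, derivedSeriesOfIdeal_succ]]
  rw [LieSubmodule.lie_le_iff]
  intro x hx m hm
  rw [LieSubmodule.mem_bot]
  exact hD1 x hx m hm

end LieMeta

/-- The free metabelian Lie algebra over `k` on a set `X` of generators: the quotient of the
free Lie algebra by its second derived ideal. -/
abbrev FreeMetabelian (X : Type v) : Type _ :=
  FreeLieAlgebra k X ⧸ derivedSeries k (FreeLieAlgebra k X) 2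

namespace FreeMetabelian

/-- The canonical (free) generators of the free metabelian Lie algebra. -/
noncomputable def of (X : Type v) (x : X) : FreeMetabelian k X :=
  LieMeta.mkHom k (derivedSeries k (FreeLieAlgebra k X) 2) (FreeLieAlgebra.of k x)

theorem isMetabelian (X : Type v) : IsMetabelian (FreeMetabelian k X) := by
  rintro ⟨a⟩ ⟨b⟩ ⟨c⟩ ⟨d⟩
  show LieMeta.mkHom k (derivedSeries k (FreeLieAlgebra k X) 2) ⁅⁅a, b⁆, ⁅c, d⁆⁆ = 0
  have h1 : ∀ x y : FreeLieAlgebra k X, ⁅x, y⁆ ∈ derivedSeries k (FreeLieAlgebra k X) 1 := by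
    intro x y
    rw [show derivedSeries k (FreeLieAlgebra k X) 1
        = ⁅(⊤ : LieIdeal k (FreeLieAlgebra k X)), (⊤ : LieIdeal k (FreeLieAlgebra k X))⁆ by
      rw [derivedSeries_def, derivedSeriesOfIdeal_succ, derivedSeriesOfIdeal_zero]]
    exact LieSubmodule.lie_mem_lie trivial trivial
  have h2 : ⁅⁅a, b⁆, ⁅c, d⁆⁆ ∈ derivedSeries k (FreeLieAlgebra k X) 2 := by
    rw [show derivedSeries k (FreeLieAlgebra k X) 2
        = ⁅derivedSeries k (FreeLieAlgebra k X) 1, derivedSeries k (FreeLieAlgebra k X) 1⁆ by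
      rw [derivedSeries_def, derivedSeriesOfIdeal_succ]]
    exact LieSubmodule.lie_mem_lie (h1 a b) (h1 c d)
  exact (LieSubmodule.Quotient.mk_eq_zero _).mpr h2

variable {k}

/-- The universal property: a map on generators into a metabelian Lie algebra extends
uniquely to the free metabelian Lie algebra. -/
noncomputable def lift {X : Type v} {B : Type w} [LieRing B] [LieAlgebra k B]
    (f : X → B) (hB : IsMetabelian B) : FreeMetabelian k X →ₗ⁅k⁆ B :=
  LieMeta.qlift _ (FreeLieAlgebra.lift k f) (by
    intro x hx
    rw [LieHom.mem_ker]
    have h1 : FreeLieAlgebra.lift k f x ∈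
        LieIdeal.map (FreeLieAlgebra.lift k f) (derivedSeries k (FreeLieAlgebra k X) 2) :=
      LieIdeal.mem_map hx
    have h2 := LieIdeal.derivedSeries_map_le (f := FreeLieAlgebra.lift k f) 2
    rw [LieMeta.derivedSeries_two_eq_bot_of_isMetabelian hB] at h2
    simpa using h2 h1)

@[simp]
theorem lift_of {X : Type v} {B : Type w} [LieRing B] [LieAlgebra k B]
    (f : X → B) (hB : IsMetabelian B) (x : X) : lift f hB (of k X x) = f x := by
  show FreeLieAlgebra.lift k f (FreeLieAlgebra.of k x) = f x
  simp

end FreeMetabelian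

namespace LieAG

variable (r n : ℕ)

/-- The inclusion of `F_r` into `F_{r+n}` sending `aᵢ` to `aᵢ`. -/
noncomputable def incl : FreeMetabelian k (Fin r) →ₗ⁅k⁆ FreeMetabelian k (Fin r ⊕ Fin n) :=
  FreeMetabelian.lift (fun i => FreeMetabelian.of k _ (Sum.inl i))
    (FreeMetabelian.isMetabelian k _)

/-- Evaluation at the point `p`: the unique Lie algebra morphism `F_{r+n} → F_r` which is the
identity on the generators of `F_r` and sends the unknown `xⱼ` to `p j`. -/
noncomputable def ev (p : Fin n → FreeMetabelian k (Fin r)) :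
    FreeMetabelian k (Fin r ⊕ Fin n) →ₗ⁅k⁆ FreeMetabelian k (Fin r) :=
  FreeMetabelian.lift (Sum.elim (FreeMetabelian.of k _) p) (FreeMetabelian.isMetabelian k _)

/-- The algebraic set defined by the system of equations `S ⊆ F_{r+n}`. -/
def vSet (S : Set (FreeMetabelian k (Fin r ⊕ Fin n))) :
    Set (Fin n → FreeMetabelian k (Fin r)) :=
  {p | ∀ f ∈ S, ev k r n p f = 0}

/-- A subset of affine `n`-space over `F_r` is algebraic if it is the solution set of some
system of equations. -/
def IsAlgSet (Y : Set (Fin n → FreeMetabelian k (Fin r))) : Prop :=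
  ∃ S, Y = vSet k r n S

/-- The radical of a subset `Y` of affine `n`-space, as a Lie ideal of `F_{r+n}`:
all equations vanishing on every point of `Y`. -/
noncomputable def radIdeal (Y : Set (Fin n → FreeMetabelian k (Fin r))) :
    LieIdeal k (FreeMetabelian k (Fin r ⊕ Fin n)) :=
  ⨅ (p : Fin n → FreeMetabelian k (Fin r)) (_ : p ∈ Y), (ev k r n p).ker

/-- The coordinate algebra `Γ(Y) = F_{r+n} / Rad(Y)`. -/
abbrev Coord (Y : Set (Fin n → FreeMetabelian k (Fin r))) : Type _ :=
  FreeMetabelian k (Fin r ⊕ Fin n) ⧸ radIdeal k r n Y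

/-- The canonical morphism `κ_Y : F_r → Γ(Y)`. -/
noncomputable def kappa (Y : Set (Fin n → FreeMetabelian k (Fin r))) :
    FreeMetabelian k (Fin r) →ₗ⁅k⁆ Coord k r n Y :=
  (LieMeta.mkHom k (radIdeal k r n Y)).comp (incl k r n)

theorem radIdeal_le_ker {Y : Set (Fin n → FreeMetabelian k (Fin r))}
    {p : Fin n → FreeMetabelian k (Fin r)} (hp : p ∈ Y) :
    radIdeal k r n Y ≤ (ev k r n p).ker := by
  exact iInf₂_le p hp

/-- The `F_r`-morphism `Γ(Y) → F_r` induced by evaluation at a point of `Y`. -/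
noncomputable def pointHom {Y : Set (Fin n → FreeMetabelian k (Fin r))}
    {p : Fin n → FreeMetabelian k (Fin r)} (hp : p ∈ Y) :
    Coord k r n Y →ₗ⁅k⁆ FreeMetabelian k (Fin r) :=
  LieMeta.qlift _ (ev k r n p) (radIdeal_le_ker k r n hp)

/-- The point of affine space associated with a morphism `Γ(Y) → F_r`: the images of
the unknowns. -/
noncomputable def pointOf {Y : Set (Fin n → FreeMetabelian k (Fin r))}
    (φ : Coord k r n Y →ₗ⁅k⁆ FreeMetabelian k (Fin r)) :
    Fin n → FreeMetabelian k (Fin r) :=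
  fun j => φ (LieMeta.mkHom k (radIdeal k r n Y) (FreeMetabelian.of k _ (Sum.inr j)))

/-- The Zariski topology on affine `n`-space over `F_r`: the algebraic sets form a
subbasis of closed sets. -/
def zariski : TopologicalSpace (Fin n → FreeMetabelian k (Fin r)) :=
  TopologicalSpace.generateFrom {U | ∃ S, U = (vSet k r n S)ᶜ}

/-- A closed subset (in the Zariski topology) is irreducible if it is nonempty and is not the
union of two proper closed subsets. -/
def IsIrredClosed (Y : Set (Fin n → FreeMetabelian k (Fin r))) : Prop :=
  Y.Nonempty ∧ ∀ Y₁ Y₂ : Set (Fin n → FreeMetabelian k (Fin r)),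
    @IsClosed _ (zariski k r n) Y₁ → @IsClosed _ (zariski k r n) Y₂ →
      Y₁ ⊂ Y → Y₂ ⊂ Y → Y ≠ Y₁ ∪ Y₂

/-- `Y` and `Z` are isomorphic algebraic sets: there are mutually inverse morphisms
(given coordinatewise by Lie polynomials) between them. -/
def AlgIso {n m : ℕ} (Y : Set (Fin n → FreeMetabelian k (Fin r)))
    (Z : Set (Fin m → FreeMetabelian k (Fin r))) : Prop :=
  ∃ (fs : Fin m → FreeMetabelian k (Fin r ⊕ Fin n))
    (gs : Fin n → FreeMetabelian k (Fin r ⊕ Fin m)),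
    (∀ p ∈ Y, (fun j => ev k r n p (fs j)) ∈ Z) ∧
    (∀ q ∈ Z, (fun i => ev k r m q (gs i)) ∈ Y) ∧
    (∀ p ∈ Y, (fun i => ev k r m (fun j => ev k r n p (fs j)) (gs i)) = p) ∧
    (∀ q ∈ Z, (fun j => ev k r n (fun i => ev k r m q (gs i)) (fs j)) = q)

end LieAG

/-- The Fitting radical of a Lie algebra: the set of elements whose generated Lie ideal is
nilpotent. -/
def fittingSet (B : Type w) [LieRing B] [LieAlgebra k B] : Set B :=
  {x | LieRing.IsNilpotent (LieSubmodule.lieSpan k B ({x} : Set B))}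

/-!
The derived algebra `B'` of a metabelian Lie algebra is abelian. If `x ∈ Fit(B)` then `ad x` is
nilpotent, and `Φ2` lowers its nilpotency index to `2`: if `ad x ^ (n + 3) = 0`, then
`c = (ad x ^ (n + 1)) y ∈ B'` satisfies `⁅⁅x, c⁆, x⁆ = 0` and `⁅⁅x, c⁆, c⁆ = 0`, so
`(ad x ^ (n + 2)) y = ⁅x, c⁆ = 0`. Conversely, if `ad x ^ 2 = 0` then `k x + (B' ∩ ker (ad x))` is
an ideal containing `x` and centralised by `x`, so by `Φ3` the ideal generated by `x` is abelian.

For an `F_r`-algebra and `x ≠ 0`, some `g = ⁅x, ι aᵢ⁆` is nonzero: otherwise `Φ3` would make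
`ι a₀` and `ι a₁` commute, whereas `a₀ ↦ (1, 0)`, `a₁ ↦ (0, 1)` maps `F_r` onto the nonabelian
algebra `aff(1)`. Then `g` commutes with `x` and with every `⁅x, y⁆ ∈ B'`, so `Φ3` gives
`⁅x, ⁅x, y⁆⁆ = 0`.
-/

@[ext] structure Aff1 (R : Type*) where
  fst : R
  snd : R

namespace Aff1

variable {R : Type*} [CommRing R]

def toProd : Aff1 R ≃ R × R where
  toFun x := (x.fst, x.snd)
  invFun p := ⟨p.1, p.2⟩

instance : AddCommGroup (Aff1 R) := toProd.addCommGroup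

instance : Module R (Aff1 R) := toProd.module R

@[simp] lemma add_mk (x y : Aff1 R) : x + y = ⟨x.fst + y.fst, x.snd + y.snd⟩ := rfl
@[simp] lemma smul_mk (t : R) (x : Aff1 R) : t • x = ⟨t * x.fst, t * x.snd⟩ := rfl
@[simp] lemma zero_mk : (0 : Aff1 R) = ⟨0, 0⟩ := rfl

instance : Bracket (Aff1 R) (Aff1 R) where
  bracket x y := ⟨0, x.fst * y.snd - y.fst * x.snd⟩

@[simp] lemma lie_mk (x y : Aff1 R) : ⁅x, y⁆ = ⟨0, x.fst * y.snd - y.fst * x.snd⟩ := rfl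

instance : LieRing (Aff1 R) where
  add_lie _ _ _ := by simp; ring
  lie_add _ _ _ := by simp; ring
  lie_self _ := by simp
  leibniz_lie _ _ _ := by simp; ring

instance : LieAlgebra R (Aff1 R) where
  lie_smul _ _ _ := by simp; ring

theorem isMetabelian : IsMetabelian (Aff1 R) := fun _ _ _ _ => by simp

end Aff1

theorem FreeMetabelian.lie_of_ne_zero {X : Type v} {i j : X} (hij : i ≠ j) :
    ⁅of k X i, of k X j⁆ ≠ 0 := by
  classical
  intro h
  let f : X → Aff1 k := fun l => if l = i then ⟨1, 0⟩ else if l = j then ⟨0, 1⟩ else 0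
  have := congrArg (lift f Aff1.isMetabelian) h
  simp [f, hij.symm] at this

variable {k} {B : Type v} [LieRing B] [LieAlgebra k B]

variable (k) in
theorem lie_mem_derivedSeries_one (a b : B) : ⁅a, b⁆ ∈ derivedSeries k B 1 := by
  rw [derivedSeries_def, derivedSeriesOfIdeal_succ, derivedSeriesOfIdeal_zero]
  exact LieSubmodule.lie_mem_lie trivial trivial

theorem IsMetabelian.lie_eq_zero (hB : IsMetabelian B) {u v : B}
    (hu : u ∈ derivedSeries k B 1) (hv : v ∈ derivedSeries k B 1) : ⁅u, v⁆ = 0 := by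
  have : ⁅u, v⁆ ∈ derivedSeries k B 2 := by
    rw [derivedSeries_def, derivedSeriesOfIdeal_succ]
    exact LieSubmodule.lie_mem_lie hu hv
  rwa [LieMeta.derivedSeries_two_eq_bot_of_isMetabelian hB] at this

theorem ad_sq_eq_zero_iff {x : B} : ad k B x ^ 2 = 0 ↔ ∀ y : B, ⁅⁅x, y⁆, x⁆ = 0 := by
  simp only [LinearMap.ext_iff, sq, Module.End.mul_apply, ad_apply, LinearMap.zero_apply]
  refine forall_congr' fun y => ?_
  rw [← lie_skew x, neg_eq_zero]

theorem isNilpotent_ad_of_mem_fittingSet {x : B} (hx : x ∈ fittingSet k B) :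
    IsNilpotent (ad k B x) := by
  set I := LieSubmodule.lieSpan k B {x}
  have : LieRing.IsNilpotent I := hx
  have hxI : x ∈ I := LieSubmodule.subset_lieSpan rfl
  obtain ⟨n, hn⟩ := nilpotent_ad_of_nilpotent_algebra k I
  refine ⟨n + 1, LinearMap.ext fun y => ?_⟩
  have hxy : ⁅x, y⁆ ∈ I := lie_mem_left k B I x y hxI
  rw [pow_succ, Module.End.mul_apply, ad_apply, LinearMap.zero_apply,
    ← LieSubalgebra.coe_ad_pow k B I ⟨x, hxI⟩ ⟨⁅x, y⁆, hxy⟩ n]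
  exact congrArg Subtype.val (LinearMap.congr_fun (hn ⟨x, hxI⟩) _)

theorem IsMetabelian.ad_pow_eq_zero_of_succ (hB : IsMetabelian B)
    (hPhi2 : ∀ x y : B, ⁅⁅x, y⁆, x⁆ = 0 → ⁅⁅x, y⁆, y⁆ = 0 → ⁅x, y⁆ = 0) {x : B} {n : ℕ}
    (h : ad k B x ^ (n + 3) = 0) : ad k B x ^ (n + 2) = 0 := by
  have ad_pow_succ : ∀ m y, (ad k B x ^ (m + 1)) y = ⁅x, (ad k B x ^ m) y⁆ := fun m y => by
    rw [pow_succ', Module.End.mul_apply, ad_apply]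
  ext y
  have hc : (ad k B x ^ (n + 1)) y ∈ derivedSeries k B 1 :=
    ad_pow_succ n y ▸ lie_mem_derivedSeries_one k _ _
  set c := (ad k B x ^ (n + 1)) y
  have hxxc : ⁅x, ⁅x, c⁆⁆ = 0 := by
    rw [← ad_pow_succ, ← ad_pow_succ, h, LinearMap.zero_apply]
  rw [ad_pow_succ, LinearMap.zero_apply]
  refine hPhi2 x c ?_ (hB.lie_eq_zero (lie_mem_derivedSeries_one k x c) hc)
  rw [← lie_skew, hxxc, neg_zero]

theorem IsMetabelian.ad_sq_eq_zero_of_isNilpotent (hB : IsMetabelian B)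
    (hPhi2 : ∀ x y : B, ⁅⁅x, y⁆, x⁆ = 0 → ⁅⁅x, y⁆, y⁆ = 0 → ⁅x, y⁆ = 0) {x : B}
    (hx : IsNilpotent (ad k B x)) : ad k B x ^ 2 = 0 := by
  obtain ⟨n, hn⟩ := hx
  suffices ∀ m, ad k B x ^ (m + 2) = 0 → ad k B x ^ 2 = 0 from
    this n (pow_eq_zero_of_le (by omega) hn)
  intro m
  induction m with
  | zero => exact id
  | succ m ih => exact fun h => ih (hB.ad_pow_eq_zero_of_succ hPhi2 h)

theorem IsMetabelian.lieSpan_le_ker_ad (hB : IsMetabelian B) {x : B} (hx : ad k B x ^ 2 = 0) :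
    (LieSubmodule.lieSpan k B {x}).toSubmodule ≤ LinearMap.ker (ad k B x) := by
  have hxx : ∀ y : B, ⁅x, ⁅x, y⁆⁆ = 0 := fun y => by
    simpa [sq] using LinearMap.congr_fun hx y
  let J : LieIdeal k B :=
    { toSubmodule := (k ∙ x) ⊔ ((derivedSeries k B 1).toSubmodule ⊓ LinearMap.ker (ad k B x))
      lie_mem := by
        intro z u hu
        obtain ⟨_, hw, v, hv, rfl⟩ := Submodule.mem_sup.mp hu
        obtain ⟨t, rfl⟩ := Submodule.mem_span_singleton.mp hw
        obtain ⟨hvB, hvx⟩ := Submodule.mem_inf.mp hv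
        rw [LinearMap.mem_ker, ad_apply] at hvx
        rw [lie_add, lie_smul]
        refine add_mem (Submodule.smul_mem _ t (Submodule.mem_sup_right
          (Submodule.mem_inf.mpr ⟨lie_mem_derivedSeries_one k z x, ?_⟩)))
          (Submodule.mem_sup_right
            (Submodule.mem_inf.mpr ⟨lie_mem_derivedSeries_one k z v, ?_⟩))
        · rw [LinearMap.mem_ker, ad_apply, ← lie_skew z x, lie_neg, hxx, neg_zero]
        · rw [LinearMap.mem_ker, ad_apply, leibniz_lie, hvx, lie_zero, add_zero]
          exact hB.lie_eq_zero (lie_mem_derivedSeries_one k x z) hvB }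
  calc (LieSubmodule.lieSpan k B {x}).toSubmodule ≤ J.toSubmodule :=
        LieSubmodule.lieSpan_le.mpr (Set.singleton_subset_iff.mpr
          (Submodule.mem_sup_left (Submodule.mem_span_singleton_self x)))
    _ ≤ LinearMap.ker (ad k B x) :=
        sup_le (Submodule.span_singleton_le_iff_mem _ _ |>.mpr (lie_self x)) inf_le_right

variable (B) in
/-- Axiom `Φ3`. -/
def IsCommTransitive : Prop :=
  ∀ x y z : B, x ≠ 0 → ⁅x, y⁆ = 0 → ⁅x, z⁆ = 0 → ⁅y, z⁆ = 0

theorem IsMetabelian.mem_fittingSet_of_ad_sq_eq_zero (hB : IsMetabelian B)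
    (hPhi3 : IsCommTransitive B) {x : B} (hx : ad k B x ^ 2 = 0) : x ∈ fittingSet k B := by
  set I := LieSubmodule.lieSpan k B {x}
  have hcomm : ∀ u ∈ I, ∀ v ∈ I, ⁅u, v⁆ = 0 := by
    rcases eq_or_ne x 0 with rfl | hx0
    · have hI : I = ⊥ := (LieSubmodule.lieSpan_eq_bot_iff k B B).mpr (by simp)
      intro u hu v _
      rw [hI, LieSubmodule.mem_bot] at hu
      rw [hu, zero_lie]
    · have hker := hB.lieSpan_le_ker_ad hx
      exact fun u hu v hv => hPhi3 x u v hx0 (hker hu) (hker hv)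
  have : IsLieAbelian I := ⟨fun u v => Subtype.ext (hcomm u u.2 v v.2)⟩
  exact LieModule.trivialIsNilpotent I I

theorem IsMetabelian.mem_fittingSet_iff_ad_sq_eq_zero (hB : IsMetabelian B)
    (hPhi2 : ∀ x y : B, ⁅⁅x, y⁆, x⁆ = 0 → ⁅⁅x, y⁆, y⁆ = 0 → ⁅x, y⁆ = 0)
    (hPhi3 : IsCommTransitive B) {x : B} : x ∈ fittingSet k B ↔ ad k B x ^ 2 = 0 :=
  ⟨fun hx => hB.ad_sq_eq_zero_of_isNilpotent hPhi2 (isNilpotent_ad_of_mem_fittingSet hx),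
    hB.mem_fittingSet_of_ad_sq_eq_zero hPhi3⟩

theorem IsMetabelian.forall_lie_lie_eq_zero_of_lie_ne_zero (hB : IsMetabelian B)
    (hPhi3 : IsCommTransitive B) {x z : B} (hxz : ⁅x, z⁆ ≠ 0) (h : ⁅⁅x, z⁆, x⁆ = 0) (y : B) :
    ⁅⁅x, y⁆, x⁆ = 0 := by
  rw [← lie_skew, hPhi3 _ x _ hxz h (hB x z x y), neg_zero]

theorem IsCommTransitive.exists_lie_ne_zero {X : Type*} [Nontrivial X]
    (hPhi3 : IsCommTransitive B) {ι : FreeMetabelian k X →ₗ⁅k⁆ B} (hι : Function.Injective ι)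
    {x : B} (hx : x ≠ 0) :
    ∃ i, ⁅x, ι (FreeMetabelian.of k X i)⁆ ≠ 0 := by
  by_contra! h
  obtain ⟨i, j, hij⟩ := exists_pair_ne X
  apply FreeMetabelian.lie_of_ne_zero k hij
  apply hι
  rw [LieHom.map_lie, map_zero]
  exact hPhi3 x _ _ hx (h i) (h j)

/-- If `B` is a metabelian Lie algebra satisfying axioms `Φ2` and `Φ3`,
then `x ∈ Fit(B)` iff `⁅⁅x,y⁆,x⁆ = 0` for all `y`; if moreover `B` is an `F_r`-algebra with
designated embedding `ι`, then `x ∈ Fit(B)` iff `⁅⁅x,ι(aᵢ)⁆,x⁆ = 0` for `i = 1,…,r`. -/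
theorem mem_fitting_iff_formula
    (k : Type u) [Field k] (B : Type v) [LieRing B] [LieAlgebra k B]
    (hmeta : IsMetabelian B)
    (hPhi2 : ∀ x y : B, ⁅⁅x, y⁆, x⁆ = 0 → ⁅⁅x, y⁆, y⁆ = 0 → ⁅x, y⁆ = 0)
    (hPhi3 : ∀ x y z : B, x ≠ 0 → ⁅x, y⁆ = 0 → ⁅x, z⁆ = 0 → ⁅y, z⁆ = 0) :
    (∀ x : B, x ∈ fittingSet k B ↔ ∀ y : B, ⁅⁅x, y⁆, x⁆ = 0) ∧
    (∀ (r : ℕ), 2 ≤ r → ∀ ι : FreeMetabelian k (Fin r) →ₗ⁅k⁆ B, Function.Injective ι →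
      ∀ x : B, x ∈ fittingSet k B ↔
        ∀ i : Fin r, ⁅⁅x, ι (FreeMetabelian.of k (Fin r) i)⁆, x⁆ = 0) := by
  have hfit : ∀ x : B, x ∈ fittingSet k B ↔ ∀ y : B, ⁅⁅x, y⁆, x⁆ = 0 := fun x =>
    (hmeta.mem_fittingSet_iff_ad_sq_eq_zero hPhi2 hPhi3).trans (ad_sq_eq_zero_iff (k := k))
  refine ⟨hfit, fun r hr ι hι x => (hfit x).trans ⟨fun h i => h _, fun h => ?_⟩⟩
  rcases eq_or_ne x 0 with rfl | hx
  · simp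
  have : Nontrivial (Fin r) := Fin.nontrivial_iff_two_le.mpr hr
  obtain ⟨i, hi⟩ := IsCommTransitive.exists_lie_ne_zero hPhi3 hι hx
  exact hmeta.forall_lie_lie_eq_zero_of_lie_ne_zero hPhi3 hi (h i)
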